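/- arXiv:1906.06330 — 2 statements merged into one kernel-verified Lean document; each statement's English description precedes it below -/
import Mathlib

section
/- If k ≥ 1 and n ≥ m ≥ 1 are integers with x_k = L_n·L_m, then |δᵏ·(2·L_m)⁻¹·α^{−n} − 1| < 6/α^{2n}. -/
/-- The Lucas numbers: L₀ = 2, L₁ = 1, L_{n+2} = L_{n+1} + L_n. -/
def lucas : ℕ → ℕ
  | 0 => 2
  | 1 => 1
  | n + 2 => lucas (n + 1) + lucas n

/-- The golden ratio α = (1 + √5)/2. -/
noncomputable def alpha : ℝ := (1 + Real.sqrt 5) / 2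

noncomputable def beta' : ℝ := (1 - Real.sqrt 5) / 2

lemma s5_sq : Real.sqrt 5 ^ 2 = 5 := Real.sq_sqrt (by norm_num)
lemma s5_lt : Real.sqrt 5 < 3 := by nlinarith [s5_sq, Real.sqrt_nonneg 5]
lemma s5_gt : 2 < Real.sqrt 5 := by nlinarith [s5_sq, Real.sqrt_nonneg 5]

lemma alpha_gt : 1 < alpha := by unfold alpha; nlinarith [s5_gt]
lemma alpha_lt : alpha < 2 := by unfold alpha; nlinarith [s5_lt]
lemma alpha_pos : 0 < alpha := lt_trans one_pos alpha_gt
lemma alpha_sq : alpha ^ 2 = alpha + 1 := by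
  unfold alpha; linear_combination s5_sq / 4
lemma beta_sq : beta' ^ 2 = beta' + 1 := by
  unfold beta'; linear_combination s5_sq / 4
lemma beta_abs : |beta'| = alpha⁻¹ := by
  have h1 : (-beta') * alpha = 1 := by
    unfold alpha beta'; linear_combination s5_sq / 4
  have h2 : beta' < 0 := by unfold beta'; nlinarith [s5_gt]
  rw [abs_of_neg h2]
  exact eq_inv_of_mul_eq_one_left h1

lemma lucas_pos (n : ℕ) : 0 < lucas n := by
  induction n using Nat.twoStepInduction with
  | zero => simp [lucas]
  | one => simp [lucas]
  | more n ih1 ih2 => show 0 < lucas (n+1) + lucas n; omega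

lemma lucas_binet (n : ℕ) : (lucas n : ℝ) = alpha ^ n + beta' ^ n := by
  induction n using Nat.twoStepInduction with
  | zero => simp [lucas]; norm_num
  | one => simp [lucas]; unfold alpha beta'; ring
  | more n ih1 ih2 =>
    show ((lucas (n+1) + lucas n : ℕ) : ℝ) = _
    push_cast
    rw [ih1, ih2]
    linear_combination (-(alpha ^ n)) * alpha_sq + (-(beta' ^ n)) * beta_sq

lemma lucas_lower (n : ℕ) (hn : 1 ≤ n) : alpha ^ n ≤ alpha * (lucas n : ℝ) := by
  rw [lucas_binet]
  have hA : alpha ≤ alpha ^ n := le_self_pow₀ alpha_gt.le (by omega)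
  have hApos : (0:ℝ) < alpha ^ n := pow_pos alpha_pos n
  have hb : |beta' ^ n| = (alpha ^ n)⁻¹ := by rw [abs_pow, beta_abs, inv_pow]
  have hb' : -(alpha ^ n)⁻¹ ≤ beta' ^ n := by rw [← hb]; exact neg_abs_le _
  have hinv : alpha ^ n * (alpha ^ n)⁻¹ = 1 := mul_inv_cancel₀ (ne_of_gt hApos)
  have h1 : 1 < alpha := alpha_gt
  have hsq := alpha_sq
  nlinarith [mul_le_mul_of_nonneg_left hb' alpha_pos.le,
    mul_pos hApos hApos, mul_le_mul_of_nonneg_left hA hApos.le]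

set_option maxHeartbeats 1000000 in
theorem stmt_10
    (d x1 y1 : ℕ) (ε : ℤ) (δ η : ℝ) (X : ℕ → ℝ)
    (hd : 2 ≤ d) (hdsf : Squarefree d)
    (hx1 : 1 ≤ x1) (hy1 : 1 ≤ y1)
    (hε : (x1 : ℤ) ^ 2 - (d : ℤ) * (y1 : ℤ) ^ 2 = ε)
    (hεpm : ε = 1 ∨ ε = -1)
    (hmin : ∀ x y : ℕ, 1 ≤ x → 1 ≤ y →
      ((x : ℤ) ^ 2 - (d : ℤ) * (y : ℤ) ^ 2 = 1 ∨
        (x : ℤ) ^ 2 - (d : ℤ) * (y : ℤ) ^ 2 = -1) → x1 ≤ x)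
    (hδ : δ = (x1 : ℝ) + (y1 : ℝ) * Real.sqrt d)
    (hη : η = (x1 : ℝ) - (y1 : ℝ) * Real.sqrt d)
    (hX : ∀ k : ℕ, X k = (δ ^ k + η ^ k) / 2)
    (k n m : ℕ) (hk : 1 ≤ k) (hm : 1 ≤ m) (hnm : m ≤ n)
    (hsol : X k = ((lucas n * lucas m : ℕ) : ℝ)) :
    |δ ^ k * ((2 * lucas m : ℕ) : ℝ)⁻¹ * alpha ^ (-(n : ℤ)) - 1| < 6 / alpha ^ (2 * n) := by
  have h1n : 1 ≤ n := le_trans hm hnm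
  set A := alpha ^ n with hAdef
  have hApos : 0 < A := pow_pos alpha_pos n
  have hAα : alpha ≤ A := le_self_pow₀ alpha_gt.le (by omega)
  have hA1 : 1 < A := lt_of_lt_of_le alpha_gt hAα
  have hzpow : alpha ^ (-(n:ℤ)) = A⁻¹ := by rw [zpow_neg, zpow_natCast]
  have h2n : alpha ^ (2*n) = A * A := by rw [two_mul, pow_add]
  rw [hzpow, h2n]
  set B := (lucas n : ℝ) with hBdef
  set C := (lucas m : ℝ) with hCdef
  have hCast : ((2 * lucas m : ℕ) : ℝ) = 2 * C := by push_cast; ring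
  rw [hCast]
  have hB1 : (1:ℝ) ≤ B := by
    rw [hBdef]; have : 1 ≤ lucas n := lucas_pos n; exact_mod_cast this
  have hC1 : (1:ℝ) ≤ C := by
    rw [hCdef]; have : 1 ≤ lucas m := lucas_pos m; exact_mod_cast this
  -- Pell basics
  have hsd : (1:ℝ) ≤ Real.sqrt d := by
    rw [show (1:ℝ) = Real.sqrt 1 by simp]
    apply Real.sqrt_le_sqrt
    exact_mod_cast le_trans one_le_two hd
  have hx : (1:ℝ) ≤ (x1:ℝ) := by exact_mod_cast hx1
  have hy : (1:ℝ) ≤ (y1:ℝ) := by exact_mod_cast hy1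
  have hδ2 : (2:ℝ) ≤ δ := by rw [hδ]; nlinarith
  have hδpos : 0 < δ := lt_of_lt_of_le two_pos hδ2
  have hδη : δ * η = (ε : ℝ) := by
    have hcast : (x1:ℝ)^2 - (d:ℝ) * (y1:ℝ)^2 = (ε:ℝ) := by exact_mod_cast hε
    have h5 : Real.sqrt d ^ 2 = (d:ℝ) := Real.sq_sqrt (by positivity)
    rw [hδ, hη]
    linear_combination hcast - (y1:ℝ)^2 * h5
  have hεabs : |(ε:ℝ)| = 1 := by rcases hεpm with h | h <;> simp [h]
  have hηδ : |η| * δ = 1 := by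
    rw [← abs_of_pos hδpos, ← abs_mul, mul_comm, hδη, hεabs]
  set D := δ ^ k with hDdef
  set H := η ^ k with hHdef
  have hHD : |H| * D = 1 := by
    rw [hHdef, hDdef, abs_pow, ← mul_pow, hηδ, one_pow]
  have hD2 : (2:ℝ) ≤ D := le_trans hδ2 (le_self_pow₀ (le_trans one_le_two hδ2) (by omega))
  have hDpos : 0 < D := lt_of_lt_of_le two_pos hD2
  have hHabs : |H| = D⁻¹ := eq_inv_of_mul_eq_one_left hHD
  have hEq : D + H = 2 * B * C := by
    have h1 := hX k
    rw [hsol] at h1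
    push_cast at h1
    rw [← hBdef, ← hCdef] at h1
    linarith [h1]
  -- lower bound on D
  have hDB : B ≤ D := by
    have hH12 : |H| ≤ 1/2 := by
      rw [hHabs]
      rw [inv_le_comm₀ (by positivity) (by norm_num)]
      linarith [hD2]
    have : H ≤ 1/2 := le_trans (le_abs_self H) hH12
    nlinarith
  have hlow := lucas_lower n h1n
  rw [← hBdef, ← hAdef] at hlow
  have hH1 : |H| ≤ alpha * A⁻¹ := by
    rw [hHabs]
    have h1 : D⁻¹ ≤ B⁻¹ := inv_anti₀ (by linarith) hDB
    have h2 : B⁻¹ ≤ alpha * A⁻¹ := by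
      have hBpos : (0:ℝ) < B := by linarith
      have key : alpha * A⁻¹ - B⁻¹ = (alpha * B - A) / (A * B) := by
        field_simp
      have hnum : (0:ℝ) ≤ alpha * B - A := by linarith
      have : (0:ℝ) ≤ (alpha * B - A) / (A * B) := div_nonneg hnum (by positivity)
      linarith [key ▸ this]
    linarith
  have hbeta := lucas_binet n
  rw [← hBdef, ← hAdef] at hbeta
  have hbabs : |beta' ^ n| = A⁻¹ := by rw [abs_pow, beta_abs, inv_pow, hAdef]
  have hD : D = 2*B*C - H := by linarith
  have hE : D * (2*C)⁻¹ * A⁻¹ - 1 = beta' ^ n * A⁻¹ - H * (2*C*A)⁻¹ := by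
    rw [hD, hbeta]
    have hC0 : C ≠ 0 := by linarith
    have hA0 : A ≠ 0 := ne_of_gt hApos
    field_simp
    ring
  rw [hE]
  have hCpos : (0:ℝ) < C := lt_of_lt_of_le one_pos hC1
  have hCApos : (0:ℝ) < 2*C*A := mul_pos (mul_pos two_pos hCpos) hApos
  have apos : 0 < A⁻¹ := inv_pos.mpr hApos
  have habs1 : |beta' ^ n * A⁻¹ - H * (2*C*A)⁻¹| ≤ |beta' ^ n| * A⁻¹ + |H| * (2*C*A)⁻¹ := by
    calc |beta' ^ n * A⁻¹ - H * (2*C*A)⁻¹| ≤ |beta' ^ n * A⁻¹| + |H * (2*C*A)⁻¹| := abs_sub _ _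
      _ = |beta' ^ n| * A⁻¹ + |H| * (2*C*A)⁻¹ := by
          rw [abs_mul, abs_mul, abs_of_pos (inv_pos.mpr hApos),
            abs_of_pos (inv_pos.mpr hCApos)]
  have hCA : (2*C*A)⁻¹ ≤ 2⁻¹ * A⁻¹ := by
    rw [show (2:ℝ)⁻¹ * A⁻¹ = (2*A)⁻¹ by rw [mul_inv]]
    have h2A : (0:ℝ) < 2*A := by linarith
    have hle : 2*A ≤ 2*C*A := by
      calc 2*A = 1*(2*A) := by ring
        _ ≤ C*(2*A) := mul_le_mul_of_nonneg_right hC1 h2A.le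
        _ = 2*C*A := by ring
    exact inv_anti₀ h2A hle
  have hfin : |beta' ^ n| * A⁻¹ + |H| * (2*C*A)⁻¹ < 6 / (A * A) := by
    rw [hbabs]
    have hq : 0 < A⁻¹ * A⁻¹ := mul_pos apos apos
    have h3 : |H| * (2*C*A)⁻¹ ≤ (alpha * A⁻¹) * (2⁻¹ * A⁻¹) :=
      mul_le_mul hH1 hCA (le_of_lt (inv_pos.mpr hCApos)) (le_of_lt (mul_pos alpha_pos apos))
    have h5 : (alpha * A⁻¹) * (2⁻¹ * A⁻¹) = (alpha/2) * (A⁻¹ * A⁻¹) := by ring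
    have h6 : (alpha/2) * (A⁻¹ * A⁻¹) < 5 * (A⁻¹ * A⁻¹) := by
      apply mul_lt_mul_of_pos_right _ hq
      linarith [alpha_lt, alpha_pos]
    have h4 : 6 / (A * A) = 6 * (A⁻¹ * A⁻¹) := by rw [div_eq_mul_inv, mul_inv]
    rw [h4]
    linarith
  exact lt_of_le_of_lt habs1 hfin
end

section
/- For all integers k ≥ 1 and n, m ≥ 0, one has δᵏ ≠ 2·L_m·αⁿ (equivalently, the quantity δᵏ·(2·L_m)⁻¹·α^{−n} − 1 is nonzero). -/
/-!
Write `δᵏ = a + b√d` with integers `a, b > 0` and `a² - d b² = εᵏ = ±1`, and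
`2 Lₘ αⁿ = Lₘ Lₙ + Lₘ Fₙ √5` where `Lₙ² - 5 Fₙ² = 4 (-1)ⁿ`.
If `d ≠ 5`, then `√(5d)` is irrational, so squaring `b√d - Lₘ Fₙ √5 ∈ ℤ` forces
`Lₘ Fₙ = 0`, and then `a + b√d` would be an integer. If `d = 5`, the two sides are equal
in `ℤ[√5]`, so they have the same norm, which gives `4 ∣ εᵏ = ±1`.
-/

open Real goldenRatio

theorem lucas_eq_goldenRatio_pow_add_goldenConj_pow (n : ℕ) :
    (lucas n : ℝ) = φ ^ n + ψ ^ n := by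
  induction n using Nat.twoStepInduction with
  | zero => norm_num [lucas]
  | one => simp [lucas, goldenRatio_add_goldenConj]
  | more n ih₀ ih₁ =>
    rw [lucas, Nat.cast_add, ih₀, ih₁, pow_add φ n 2, pow_add ψ n 2, goldenRatio_sq,
      goldenConj_sq]
    ring

theorem fib_mul_sqrt_five (n : ℕ) : (Nat.fib n : ℝ) * √5 = φ ^ n - ψ ^ n := by
  rw [coe_fib_eq, div_mul_cancel₀ _ (by positivity)]

theorem two_mul_alpha_pow (n : ℕ) : 2 * alpha ^ n = lucas n + Nat.fib n * √5 := by
  rw [fib_mul_sqrt_five, lucas_eq_goldenRatio_pow_add_goldenConj_pow]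
  change 2 * φ ^ n = _
  ring

theorem lucas_sq_sub_five_mul_fib_sq (n : ℕ) :
    (lucas n : ℤ) ^ 2 - 5 * (Nat.fib n : ℤ) ^ 2 = 4 * (-1) ^ n := by
  have h := congrArg (· ^ 2) (fib_mul_sqrt_five n)
  simp only [mul_pow, sq_sqrt (show (0 : ℝ) ≤ 5 by norm_num)] at h
  have : ((lucas n : ℤ) ^ 2 - 5 * (Nat.fib n : ℤ) ^ 2 : ℝ) = 4 * (-1) ^ n := by
    push_cast
    rw [lucas_eq_goldenRatio_pow_add_goldenConj_pow, ← goldenRatio_mul_goldenConj, mul_pow]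
    linear_combination -h
  exact_mod_cast this

theorem not_isSquare_of_squarefree {d : ℕ} (hsf : Squarefree d) (hd : d ≠ 1) :
    ¬IsSquare d := by
  rintro ⟨r, rfl⟩
  obtain rfl := Nat.isUnit_iff.mp (hsf r dvd_rfl)
  exact hd rfl

theorem not_isSquare_mul_prime {p d : ℕ} (hp : p.Prime) (hsf : Squarefree d) (hd : d ≠ p) :
    ¬IsSquare (d * p) := by
  rintro ⟨r, hr⟩
  obtain ⟨s, rfl⟩ : p ∣ r := (hp.dvd_mul.mp ⟨d, by rw [← hr, mul_comm]⟩).elim id id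
  have hds : d = p * (s * s) := by
    apply Nat.eq_of_mul_eq_mul_right hp.pos
    rw [hr]
    ring
  obtain rfl := Nat.isUnit_iff.mp (hsf s ⟨p, by rw [hds]; ring⟩)
  exact hd (by simpa using hds)

theorem mul_eq_zero_of_add_mul_sqrt_eq {p q : ℕ} (hpq : ¬IsSquare (p * q)) {a b c e : ℤ}
    (h : a + b * √p = c + e * √q) : b * e = 0 := by
  by_contra hbe
  have hirr : Irrational ((2 * b * e : ℤ) * √(p * q : ℕ)) :=
    (irrational_sqrt_natCast_iff.mpr hpq).intCast_mul (by simpa using hbe)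
  refine hirr.ne_int (b ^ 2 * p + e ^ 2 * q - (c - a) ^ 2) ?_
  have hsq := congrArg (· ^ 2) (show b * √p - e * √q = c - a by linarith)
  simp only [sub_sq, mul_pow, sq_sqrt (Nat.cast_nonneg _)] at hsq
  push_cast
  rw [sqrt_mul (Nat.cast_nonneg _)]
  linear_combination -hsq

namespace Zsqrtd

theorem norm_pow {d : ℤ} (z : ℤ√d) (k : ℕ) : (z ^ k).norm = z.norm ^ k :=
  map_pow normMonoidHom z k

theorem re_pos_and_im_pos_pow {d : ℤ} (hd : 0 ≤ d) {z : ℤ√d} (hre : 0 < z.re)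
    (him : 0 < z.im) {k : ℕ} (hk : k ≠ 0) : 0 < (z ^ k).re ∧ 0 < (z ^ k).im := by
  induction k with
  | zero => exact absurd rfl hk
  | succ k ih =>
    rcases eq_or_ne k 0 with rfl | hk
    · simpa using ⟨hre, him⟩
    obtain ⟨ih_re, ih_im⟩ := ih hk
    rw [pow_succ, re_mul, im_mul]
    constructor <;> positivity

theorem toReal_ne_intCast_add_intCast_mul_sqrt {d q : ℕ} (hd : ¬IsSquare d)
    (hdq : ¬IsSquare (d * q)) {w : ℤ√(d : ℤ)} (him : w.im ≠ 0) (c e : ℤ) :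
    toReal d.cast_nonneg w ≠ c + e * √q := by
  intro h
  rw [toReal_apply, Int.cast_natCast] at h
  rw [(mul_eq_zero.mp (mul_eq_zero_of_add_mul_sqrt_eq hdq h)).resolve_left him, Int.cast_zero,
    zero_mul, add_zero] at h
  exact (((irrational_sqrt_natCast_iff.mpr hd).intCast_mul him).intCast_add _).ne_int c h

/-- `2 φⁿ = Lₙ + Fₙ √5`, as an element of `ℤ[√5]`. -/
def twoGoldenRatioPow (n : ℕ) : ℤ√5 := ⟨lucas n, Nat.fib n⟩

theorem toReal_twoGoldenRatioPow (n : ℕ) :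
    toReal (by norm_num) (twoGoldenRatioPow n) = 2 * alpha ^ n := by
  rw [two_mul_alpha_pow, toReal_apply]
  simp [twoGoldenRatioPow]

theorem norm_twoGoldenRatioPow (n : ℕ) : (twoGoldenRatioPow n).norm = 4 * (-1) ^ n := by
  rw [norm_def, ← lucas_sq_sub_five_mul_fib_sq]
  simp only [twoGoldenRatioPow]
  ring

theorem toReal_ne_two_mul_lucas_mul_alpha_pow {w : ℤ√5} (hw : IsUnit w.norm) (m n : ℕ) :
    toReal (by norm_num) w ≠ 2 * lucas m * alpha ^ n := by
  intro h
  have hw' : w = lucas m * twoGoldenRatioPow n := by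
    refine toReal_injective (by norm_num)
      (fun k hk => (by norm_num : ¬IsSquare (5 : ℤ)) ⟨k, hk⟩) ?_
    rw [h, map_mul, toReal_twoGoldenRatioPow, map_natCast]
    ring
  have h4 : (4 : ℤ) ∣ w.norm :=
    ⟨lucas m ^ 2 * (-1) ^ n, by rw [hw', norm_mul, norm_twoGoldenRatioPow, norm_natCast]; ring⟩
  exact absurd (isUnit_of_dvd_unit h4 hw) (by norm_num [Int.isUnit_iff])

end Zsqrtd

theorem stmt_11_general
    (d x1 y1 : ℕ) (ε : ℤ) (δ : ℝ)
    (hd : 2 ≤ d) (hdsf : Squarefree d)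
    (hx1 : 1 ≤ x1) (hy1 : 1 ≤ y1)
    (hε : (x1 : ℤ) ^ 2 - (d : ℤ) * (y1 : ℤ) ^ 2 = ε)
    (hεpm : ε = 1 ∨ ε = -1)
    (hδ : δ = (x1 : ℝ) + (y1 : ℝ) * Real.sqrt d)
    (k n m : ℕ) (hk : 1 ≤ k) :
    δ ^ k ≠ 2 * (lucas m : ℝ) * alpha ^ n := by
  set z : ℤ√(d : ℤ) := ⟨x1, y1⟩
  have hzk : Zsqrtd.toReal d.cast_nonneg (z ^ k) = δ ^ k := by
    rw [map_pow]
    simp [z, hδ]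
  have hnorm : IsUnit (z ^ k).norm := by
    have hz : z.norm = ε := by rw [Zsqrtd.norm_def, ← hε]; ring
    rw [Zsqrtd.norm_pow, hz]
    exact (Int.isUnit_iff.mpr hεpm).pow k
  rw [← hzk]
  by_cases h5 : d = 5
  · subst h5
    exact Zsqrtd.toReal_ne_two_mul_lucas_mul_alpha_pow hnorm m n
  have him : (z ^ k).im ≠ 0 := (Zsqrtd.re_pos_and_im_pos_pow d.cast_nonneg
    (by simp only [z]; omega) (by simp only [z]; omega) (by omega)).2.ne'
  rw [mul_right_comm, two_mul_alpha_pow]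
  convert Zsqrtd.toReal_ne_intCast_add_intCast_mul_sqrt (not_isSquare_of_squarefree hdsf (by omega))
    (not_isSquare_mul_prime Nat.prime_five hdsf h5) him (lucas n * lucas m) (Nat.fib n * lucas m)
    using 1
  push_cast
  ring

theorem stmt_11
    (d x1 y1 : ℕ) (ε : ℤ) (δ η : ℝ) (X : ℕ → ℝ)
    (hd : 2 ≤ d) (hdsf : Squarefree d)
    (hx1 : 1 ≤ x1) (hy1 : 1 ≤ y1)
    (hε : (x1 : ℤ) ^ 2 - (d : ℤ) * (y1 : ℤ) ^ 2 = ε)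
    (hεpm : ε = 1 ∨ ε = -1)
    (hmin : ∀ x y : ℕ, 1 ≤ x → 1 ≤ y →
      ((x : ℤ) ^ 2 - (d : ℤ) * (y : ℤ) ^ 2 = 1 ∨
        (x : ℤ) ^ 2 - (d : ℤ) * (y : ℤ) ^ 2 = -1) → x1 ≤ x)
    (hδ : δ = (x1 : ℝ) + (y1 : ℝ) * Real.sqrt d)
    (hη : η = (x1 : ℝ) - (y1 : ℝ) * Real.sqrt d)
    (hX : ∀ k : ℕ, X k = (δ ^ k + η ^ k) / 2)
    (k n m : ℕ) (hk : 1 ≤ k) :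
    δ ^ k ≠ 2 * (lucas m : ℝ) * alpha ^ n :=
  stmt_11_general d x1 y1 ε δ hd hdsf hx1 hy1 hε hεpm hδ k n m hk
end
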